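/- arXiv:2505.14198 — 4 statements merged into one kernel-verified Lean document; each statement's English description precedes it below -/
import Mathlib

section
/- Let A be a q×q complex matrix and let λ₁ be an eigenvalue of A of algebraic multiplicity 1, with u₁ a nonzero left eigenvector (u₁'A = λ₁u₁'). Then there exists a unique right eigenvector v₁ of A for λ₁ with u₁·v₁ = 1 (bilinear dot product, no conjugation), and the spectral projection for λ₁ is given by P_{λ₁} = v₁u₁'; equivalently, P_{λ₁}v = (u₁·v)v₁ for every vector v ∈ ℂ^q. -/
/-!
The simple root `λ` of the characteristic polynomial makes the generalized eigenspace `E_λ`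
one-dimensional, hence equal to the eigenspace. The functional `φ = u ⬝ᵥ ·` satisfies
`φ ∘ A = λ φ`, so `φ ∘ (A - μ)^k = (λ - μ)^k φ` and `φ` vanishes on `E_μ` for every `μ ≠ λ`.
As the generalized eigenspaces span the whole space and `φ ≠ 0`, `φ` is nonzero on the line
`E_λ`, which gives the normalized eigenvector `v₁`. Finally `P` and `x ↦ φ x • v₁` are both the
identity on `E_λ = ℂ v₁` and zero on every other `E_μ`, so they coincide.
-/

open Matrix

/-- `P` is the spectral projection of `A` for the eigenvalue `lam`: it is the identity
on the generalized eigenspace E_lam = ker((A − lam I)^q) and vanishes on the generalized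
eigenspace E_mu = ker((A − mu I)^q) of every other eigenvalue `mu`. Since ℂ^q is the
direct sum of the generalized eigenspaces, these conditions determine `P` uniquely. -/
def IsSpectralProj {q : ℕ} (A : Matrix (Fin q) (Fin q) ℂ) (lam : ℂ)
    (P : Matrix (Fin q) (Fin q) ℂ) : Prop :=
  (∀ v : Fin q → ℂ, ((A - lam • 1) ^ q).mulVec v = 0 → P.mulVec v = v) ∧
  ∀ mu : ℂ, mu ≠ lam → ∀ v : Fin q → ℂ, ((A - mu • 1) ^ q).mulVec v = 0 → P.mulVec v = 0

open Module Module.End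

theorem Submodule.eq_smul_of_finrank_eq_one {K V : Type*} [Field K] [AddCommGroup V]
    [Module K V] {S : Submodule K V} (hS : finrank K S = 1) {φ : Dual K V} {v x : V}
    (hv : v ∈ S) (hφv : φ v = 1) (hx : x ∈ S) : x = φ x • v := by
  have hv0 : (⟨v, hv⟩ : S) ≠ 0 := fun h0 => by simp_all
  obtain ⟨c, hc⟩ := (finrank_eq_one_iff_of_nonzero' _ hv0).1 hS ⟨x, hx⟩
  have hcx : c • v = x := congrArg Subtype.val hc
  rw [← hcx, map_smul, hφv, smul_eq_mul, mul_one]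

namespace Module.End

variable {K V : Type*} [Field K] [AddCommGroup V] [Module K V]

theorem finrank_eigenspace_eq_one_of_rootMultiplicity_eq_one [FiniteDimensional K V]
    {f : End K V} {μ : K} (h : f.charpoly.rootMultiplicity μ = 1) :
    finrank K (f.eigenspace μ) = 1 := by
  have hμ : f.HasEigenvalue μ := by
    rw [hasEigenvalue_iff_isRoot_charpoly]
    exact (Polynomial.rootMultiplicity_pos f.charpoly_monic.ne_zero).1 (h ▸ one_pos)
  exact le_antisymm (h ▸ LinearMap.finrank_eigenspace_le f μ) (Submodule.one_le_finrank_iff.2 hμ)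

theorem maxGenEigenspace_eq_eigenspace_of_rootMultiplicity_eq_one [FiniteDimensional K V]
    {f : End K V} {μ : K} (h : f.charpoly.rootMultiplicity μ = 1) :
    f.maxGenEigenspace μ = f.eigenspace μ := by
  refine (Submodule.eq_of_le_of_finrank_le eigenspace_le_maxGenEigenspace ?_).symm
  rw [LinearMap.finrank_maxGenEigenspace_eq, h,
    finrank_eigenspace_eq_one_of_rootMultiplicity_eq_one h]

theorem maxGenEigenspace_le_ker_of_comp_eq_smul {f : End K V} {φ : Dual K V} {lam μ : K}
    (hφ : φ ∘ₗ f = lam • φ) (hμ : μ ≠ lam) : f.maxGenEigenspace μ ≤ LinearMap.ker φ := by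
  have hpow (k : ℕ) (x : V) : φ (((f - μ • 1) ^ k) x) = (lam - μ) ^ k * φ x := by
    induction k generalizing x with
    | zero => simp
    | succ k ih =>
      rw [pow_succ, mul_apply, ih, LinearMap.sub_apply, map_sub, ← LinearMap.comp_apply, hφ]
      simp only [LinearMap.smul_apply, one_apply, map_smul, smul_eq_mul]
      ring
  intro x hx
  obtain ⟨k, hk⟩ := (mem_maxGenEigenspace f μ x).1 hx
  have hφx := hpow k x
  rw [hk, map_zero, eq_comm, mul_eq_zero] at hφx
  exact hφx.resolve_left (pow_ne_zero k (sub_ne_zero.2 hμ.symm))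

section IsAlgClosed

variable [IsAlgClosed K] [FiniteDimensional K V]

theorem eq_of_eqOn_maxGenEigenspace {W : Type*} [AddCommGroup W] [Module K W] (f : End K V)
    {g h : V →ₗ[K] W} (H : ∀ μ, ∀ x ∈ f.maxGenEigenspace μ, g x = h x) : g = h :=
  LinearMap.eqLocus_eq_top.1 <| eq_top_iff.2 <|
    f.iSup_maxGenEigenspace_eq_top ▸ iSup_le fun μ x hx => H μ x hx

theorem exists_mem_maxGenEigenspace_apply_ne_zero {f : End K V} {φ : Dual K V} {lam : K}
    (hφ0 : φ ≠ 0) (hφ : φ ∘ₗ f = lam • φ) : ∃ x ∈ f.maxGenEigenspace lam, φ x ≠ 0 := by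
  by_contra! H
  refine hφ0 (eq_of_eqOn_maxGenEigenspace f fun μ x hx => ?_)
  rcases eq_or_ne μ lam with rfl | hμ
  · exact H x hx
  · exact maxGenEigenspace_le_ker_of_comp_eq_smul hφ hμ hx

variable {f : End K V} {lam : K} {φ : Dual K V}

theorem existsUnique_apply_eq_smul_and_apply_eq_one (hf : f.charpoly.rootMultiplicity lam = 1)
    (hφ0 : φ ≠ 0) (hφ : φ ∘ₗ f = lam • φ) :
    ∃! v, f v = lam • v ∧ φ v = 1 := by
  obtain ⟨x, hx, hφx⟩ := exists_mem_maxGenEigenspace_apply_ne_zero hφ0 hφ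
  rw [maxGenEigenspace_eq_eigenspace_of_rootMultiplicity_eq_one hf, mem_eigenspace_iff] at hx
  have hv : f ((φ x)⁻¹ • x) = lam • ((φ x)⁻¹ • x) := by rw [map_smul, hx, smul_comm]
  have hφv : φ ((φ x)⁻¹ • x) = 1 := by rw [map_smul, smul_eq_mul, inv_mul_cancel₀ hφx]
  refine ⟨_, ⟨hv, hφv⟩, fun y ⟨hy, hφy⟩ => ?_⟩
  rw [Submodule.eq_smul_of_finrank_eq_one (finrank_eigenspace_eq_one_of_rootMultiplicity_eq_one hf)
    (mem_eigenspace_iff.2 hv) hφv (mem_eigenspace_iff.2 hy), hφy, one_smul]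

theorem eq_smulRight_of_eqOn_maxGenEigenspace (hf : f.charpoly.rootMultiplicity lam = 1)
    (hφ : φ ∘ₗ f = lam • φ) {v : V} (hv : f v = lam • v) (hφv : φ v = 1)
    {p : End K V} (hp_id : ∀ x ∈ f.maxGenEigenspace lam, p x = x)
    (hp_zero : ∀ μ ≠ lam, ∀ x ∈ f.maxGenEigenspace μ, p x = 0) :
    p = φ.smulRight v := by
  refine eq_of_eqOn_maxGenEigenspace f fun μ x hx => ?_
  rw [LinearMap.smulRight_apply]
  rcases eq_or_ne μ lam with rfl | hμ
  · rw [hp_id x hx]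
    rw [maxGenEigenspace_eq_eigenspace_of_rootMultiplicity_eq_one hf] at hx
    exact Submodule.eq_smul_of_finrank_eq_one
      (finrank_eigenspace_eq_one_of_rootMultiplicity_eq_one hf) (mem_eigenspace_iff.2 hv) hφv hx
  · rw [hp_zero μ hμ x hx, LinearMap.mem_ker.1 (maxGenEigenspace_le_ker_of_comp_eq_smul hφ hμ hx),
      zero_smul]

end IsAlgClosed

end Module.End

namespace Matrix

variable {n K : Type*} [Fintype n] [DecidableEq n]

theorem dotProductEquiv_comp_toLin' [CommSemiring K] (u : n → K) (A : Matrix n n K) :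
    dotProductEquiv K n u ∘ₗ A.toLin' = dotProductEquiv K n (u ᵥ* A) :=
  LinearMap.ext fun x => by simp [dotProduct_mulVec]

theorem mulVec_sub_smul_one_pow_card_eq_zero_iff [Field K] (A : Matrix n n K) (μ : K)
    (x : n → K) :
    ((A - μ • 1) ^ Fintype.card n) *ᵥ x = 0 ↔ x ∈ maxGenEigenspace A.toLin' μ := by
  rw [maxGenEigenspace_eq_genEigenspace_finrank, finrank_fintype_fun_eq_card,
    mem_genEigenspace_nat, LinearMap.mem_ker, ← toLin'_apply, toLin'_pow, map_sub, map_smul,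
    toLin'_one, Module.End.one_eq_id]

end Matrix

theorem spectral_projection_of_simple_eigenvalue_general (q : ℕ)
    (A : Matrix (Fin q) (Fin q) ℂ) (lam : ℂ)
    (hmult : Polynomial.rootMultiplicity lam (Matrix.charpoly A) = 1)
    (u : Fin q → ℂ) (hu : u ≠ 0) (hleft : Matrix.vecMul u A = lam • u)
    (P : Matrix (Fin q) (Fin q) ℂ) (hP : IsSpectralProj A lam P) :
    (∃! v : Fin q → ℂ, A.mulVec v = lam • v ∧ u ⬝ᵥ v = 1) ∧
      ∀ v : Fin q → ℂ, A.mulVec v = lam • v → u ⬝ᵥ v = 1 →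
        P = Matrix.vecMulVec v u ∧ ∀ x : Fin q → ℂ, P.mulVec x = (u ⬝ᵥ x) • v := by
  set φ := dotProductEquiv ℂ (Fin q) u
  have hφ : φ ∘ₗ A.toLin' = lam • φ := by rw [dotProductEquiv_comp_toLin', hleft, map_smul]
  rw [← charpoly_toLin'] at hmult
  have hmem (μ : ℂ) (x : Fin q → ℂ) (hx : x ∈ maxGenEigenspace A.toLin' μ) :
      ((A - μ • 1) ^ q) *ᵥ x = 0 := by
    simpa using (mulVec_sub_smul_one_pow_card_eq_zero_iff A μ x).2 hx
  have hφ0 : φ ≠ 0 := by simpa [φ] using hu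
  refine ⟨by simpa [φ] using existsUnique_apply_eq_smul_and_apply_eq_one hmult hφ0 hφ,
    fun v hv hφv => ?_⟩
  have hPv : P.toLin' = φ.smulRight v :=
    eq_smulRight_of_eqOn_maxGenEigenspace hmult hφ (by simpa using hv) hφv
      (fun x hx => hP.1 x (hmem lam x hx)) fun μ hμ x hx => hP.2 μ hμ x (hmem μ x hx)
  have hPx (x : Fin q → ℂ) : P *ᵥ x = (u ⬝ᵥ x) • v := by
    simpa [φ] using LinearMap.congr_fun hPv x
  exact ⟨ext_of_mulVec_single fun i => by ext j; simp [hPx, vecMulVec_apply, mul_comm], hPx⟩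

/-- Let A be a q×q complex matrix and λ₁ an eigenvalue of A of algebraic
multiplicity 1, with u₁ a nonzero left eigenvector (u₁'A = λ₁u₁'). Then there exists a
unique right eigenvector v₁ of A for λ₁ with u₁·v₁ = 1 (bilinear dot product), and the
spectral projection for λ₁ is P_{λ₁} = v₁u₁'; equivalently P_{λ₁}v = (u₁·v)v₁ for all v. -/
theorem spectral_projection_of_simple_eigenvalue (q : ℕ) (hq : 1 ≤ q)
    (A : Matrix (Fin q) (Fin q) ℂ) (lam : ℂ)
    (hmult : Polynomial.rootMultiplicity lam (Matrix.charpoly A) = 1)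
    (u : Fin q → ℂ) (hu : u ≠ 0) (hleft : Matrix.vecMul u A = lam • u)
    (P : Matrix (Fin q) (Fin q) ℂ) (hP : IsSpectralProj A lam P) :
    (∃! v : Fin q → ℂ, A.mulVec v = lam • v ∧ u ⬝ᵥ v = 1) ∧
      ∀ v : Fin q → ℂ, A.mulVec v = lam • v → u ⬝ᵥ v = 1 →
        P = Matrix.vecMulVec v u ∧ ∀ x : Fin q → ℂ, P.mulVec x = (u ⬝ᵥ x) • v :=
  spectral_projection_of_simple_eigenvalue_general q A lam hmult u hu hleft P hP
end

section
/- Under the Pólya urn hypotheses, assume moreover that λ₁ = b is an eigenvalue of A of algebraic multiplicity 1. Then for every n ≥ 0, P_{λ₁}(X_n − E X_n) = 0 almost surely, where P_{λ₁} is the spectral projection of A (extended complex-linearly to ℂ^q ⊇ ℝ^q) for the eigenvalue λ₁. -/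
open MeasureTheory Matrix Filter

/-- `ν` is the nilpotency index ν_lam of N_lam := (A − lam I) P_lam, i.e. the unique
integer ν ≥ 0 with N_lam^(ν+1) = 0 and (ν = 0 or N_lam^ν ≠ 0). -/
def NilIndexOf {q : ℕ} (A : Matrix (Fin q) (Fin q) ℂ) (lam : ℂ)
    (P : Matrix (Fin q) (Fin q) ℂ) (ν : ℕ) : Prop :=
  ((A - lam • 1) * P) ^ (ν + 1) = 0 ∧ (ν = 0 ∨ ((A - lam • 1) * P) ^ ν ≠ 0)

/-!
Because `a'A = b a'`, the functional `x ↦ a·x` kills every generalized eigenspace of `A` other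
than `E_b`; since `ℂ^q` is their sum and `a ≠ 0`, it does not vanish on the line `E_b = ℂ u`.
Hence the spectral projection is the rank-one map `x ↦ (a·x / a·u) u`, which kills `X_n − E X_n`
because the urn constraint `a·X_n = w_n` forces `a·(X_n − E X_n) = 0` almost surely.
-/

open Module Module.End

section GeneralizedEigenspaces

variable {K V : Type*} [Field K] [AddCommGroup V] [Module K V]

lemma Module.Dual.comp_pow_sub_smul_one {f : End K V} {φ : Dual K V} {b : K}
    (hφ : φ ∘ₗ f = b • φ) (c : K) (k : ℕ) : φ ∘ₗ (f - c • 1) ^ k = (b - c) ^ k • φ := by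
  induction k with
  | zero => ext; simp
  | succ k ih =>
    rw [pow_succ, Module.End.mul_eq_comp, ← LinearMap.comp_assoc, ih, LinearMap.smul_comp,
      LinearMap.comp_sub, hφ, LinearMap.comp_smul, Module.End.one_eq_id, LinearMap.comp_id,
      pow_succ]
    module

lemma Module.Dual.apply_eq_zero_of_mem_maxGenEigenspace {f : End K V} {φ : Dual K V} {b c : K}
    (hφ : φ ∘ₗ f = b • φ) (hc : c ≠ b) {x : V} (hx : x ∈ f.maxGenEigenspace c) : φ x = 0 := by
  obtain ⟨k, hk⟩ := (f.mem_maxGenEigenspace c x).1 hx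
  have := LinearMap.congr_fun (φ.comp_pow_sub_smul_one hφ c k) x
  rw [LinearMap.comp_apply, hk, map_zero, LinearMap.smul_apply, smul_eq_mul, eq_comm] at this
  exact (mul_eq_zero.1 this).resolve_left (pow_ne_zero _ (sub_ne_zero.2 hc.symm))

variable [IsAlgClosed K] [FiniteDimensional K V]

lemma Module.End.linearMap_eq_zero_of_forall_maxGenEigenspace {W : Type*} [AddCommGroup W]
    [Module K W] (f : End K V) {g : V →ₗ[K] W}
    (hg : ∀ c, ∀ x ∈ f.maxGenEigenspace c, g x = 0) : g = 0 := by
  refine LinearMap.ker_eq_top.1 (eq_top_iff.2 ?_)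
  rw [← f.iSup_maxGenEigenspace_eq_top]
  exact iSup_le fun c x hx => hg c x hx

lemma Module.Dual.exists_mem_maxGenEigenspace_apply_ne_zero {f : End K V} {φ : Dual K V} {b : K}
    (hφ0 : φ ≠ 0) (hφ : φ ∘ₗ f = b • φ) : ∃ u ∈ f.maxGenEigenspace b, φ u ≠ 0 := by
  by_contra! h
  refine hφ0 (f.linearMap_eq_zero_of_forall_maxGenEigenspace fun c x hx => ?_)
  rcases eq_or_ne c b with rfl | hc
  · exact h x hx
  · exact φ.apply_eq_zero_of_mem_maxGenEigenspace hφ hc hx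

theorem Module.End.eq_smulRight_of_finrank_maxGenEigenspace_eq_one {f P : End K V}
    {φ : Dual K V} {b : K} (hφ : φ ∘ₗ f = b • φ) (hb : finrank K (f.maxGenEigenspace b) = 1)
    (hPb : ∀ x ∈ f.maxGenEigenspace b, P x = x)
    (hP : ∀ c ≠ b, ∀ x ∈ f.maxGenEigenspace c, P x = 0)
    {u : V} (hu : u ∈ f.maxGenEigenspace b) (hφu : φ u ≠ 0) :
    P = (φ u)⁻¹ • φ.smulRight u := by
  rw [← sub_eq_zero]
  refine f.linearMap_eq_zero_of_forall_maxGenEigenspace fun c x hx => ?_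
  rcases eq_or_ne c b with rfl | hc
  · have hu0 : (⟨u, hu⟩ : f.maxGenEigenspace c) ≠ 0 := fun h =>
      hφu (by rw [show u = 0 from congrArg Subtype.val h, map_zero])
    obtain ⟨t, rfl⟩ : ∃ t : K, t • u = x := by
      simpa [Subtype.ext_iff] using (finrank_eq_one_iff_of_nonzero' _ hu0).1 hb ⟨x, hx⟩
    simp [hPb u hu, hφu]
  · simp [hP c hc x hx, φ.apply_eq_zero_of_mem_maxGenEigenspace hφ hc hx]

end GeneralizedEigenspaces

lemma Matrix.mem_maxGenEigenspace_toLin'_iff {K n : Type*} [Field K] [Fintype n] [DecidableEq n]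
    (B : Matrix n n K) (c : K) (x : n → K) :
    x ∈ maxGenEigenspace B.toLin' c ↔ ((B - c • 1) ^ Fintype.card n) *ᵥ x = 0 := by
  rw [maxGenEigenspace_eq_genEigenspace_finrank, mem_genEigenspace_nat, LinearMap.mem_ker,
    finrank_fintype_fun_eq_card, ← Matrix.toLin'_apply]
  simp [Module.End.one_eq_id]

lemma dotProductBilin_comp_toLin' {K n : Type*} [Field K] [Fintype n] [DecidableEq n]
    {B : Matrix n n K} {w : n → K} {b : K} (hw : w ᵥ* B = b • w) :
    dotProductBilin K K w ∘ₗ B.toLin' = b • dotProductBilin K K w := by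
  refine LinearMap.ext fun x => ?_
  simp [dotProduct_mulVec, hw]

theorem IsSpectralProj.mulVec_eq_zero_of_dotProduct_eq_zero {q : ℕ}
    {B P : Matrix (Fin q) (Fin q) ℂ} {b : ℂ} (hP : IsSpectralProj B b P)
    (hsimple : B.charpoly.rootMultiplicity b = 1) {w : Fin q → ℂ} (hw0 : w ≠ 0)
    (hw : w ᵥ* B = b • w) {v : Fin q → ℂ} (hv : w ⬝ᵥ v = 0) : P *ᵥ v = 0 := by
  set φ := dotProductBilin ℂ ℂ w
  have hφ : φ ∘ₗ B.toLin' = b • φ := dotProductBilin_comp_toLin' hw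
  have hφ0 : φ ≠ 0 := fun h =>
    hw0 (funext fun j => by simpa [φ] using LinearMap.congr_fun h (Pi.single j 1))
  have hmem (c : ℂ) (x : Fin q → ℂ) :
      x ∈ maxGenEigenspace B.toLin' c ↔ ((B - c • 1) ^ q) *ᵥ x = 0 := by
    rw [B.mem_maxGenEigenspace_toLin'_iff, Fintype.card_fin]
  obtain ⟨u, hu, hφu⟩ := Module.Dual.exists_mem_maxGenEigenspace_apply_ne_zero hφ0 hφ
  have hPu : P.toLin' = (φ u)⁻¹ • φ.smulRight u := by
    refine eq_smulRight_of_finrank_maxGenEigenspace_eq_one hφ ?_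
      (fun x hx => hP.1 x ((hmem b x).1 hx)) (fun c hc x hx => hP.2 c hc x ((hmem c x).1 hx))
      hu hφu
    rw [LinearMap.finrank_maxGenEigenspace_eq, charpoly_toLin', hsimple]
  simpa [φ, hv] using LinearMap.congr_fun hPu v

lemma ae_apply_sub_integral_eq_zero {Ω E : Type*} {m0 : MeasurableSpace Ω} {μ : Measure Ω}
    [IsProbabilityMeasure μ] [NormedAddCommGroup E] [NormedSpace ℝ E] [CompleteSpace E]
    {Y : Ω → E} (hY : Integrable Y μ) (L : E →L[ℝ] ℝ) {w : ℝ} (hL : ∀ᵐ ω ∂μ, L (Y ω) = w) :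
    ∀ᵐ ω ∂μ, L (Y ω - ∫ ω', Y ω' ∂μ) = 0 := by
  have hmean : L (∫ ω, Y ω ∂μ) = w := by
    rw [← L.integral_comp_comm hY, integral_congr_ae hL, integral_const, probReal_univ, one_smul]
  filter_upwards [hL] with ω hω
  rw [map_sub, hω, hmean, sub_self]

theorem urn_spectralProj_top_eigenvalue_centered_eq_zero_general
    (q : ℕ) {Ω : Type} {m0 : MeasurableSpace Ω}
    (μ : Measure Ω) [IsProbabilityMeasure μ]
    (a : Fin q → ℝ) (b : ℝ)
    (A : Matrix (Fin q) (Fin q) ℝ) (hA : Matrix.vecMul a A = b • a)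
    (X : ℕ → Ω → EuclideanSpace ℝ (Fin q))
    (hXint : ∀ n, Integrable (X n) μ)
    (x₀ : EuclideanSpace ℝ (Fin q))
    (hw₀ : 0 < ∑ j, a j * x₀ j)
    (hwn : ∀ n : ℕ, ∀ᵐ ω ∂μ, ∑ j, a j * X n ω j = (∑ j, a j * x₀ j) + (n : ℝ) * b)
    (hsimple : Polynomial.rootMultiplicity (b : ℂ)
      (Matrix.charpoly (A.map (fun x : ℝ => (x : ℂ)))) = 1)
    (P : Matrix (Fin q) (Fin q) ℂ)
    (hP : IsSpectralProj (A.map (fun x : ℝ => (x : ℂ))) (b : ℂ) P) :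
    ∀ n : ℕ, ∀ᵐ ω ∂μ,
      P.mulVec (fun j => ((X n ω j - (∫ ω', X n ω' ∂μ) j : ℝ) : ℂ)) = 0 := by
  intro n
  let L := innerSL ℝ (WithLp.toLp 2 a)
  have hL (x : EuclideanSpace ℝ (Fin q)) : L x = ∑ j, a j * x j := by
    simp [L, EuclideanSpace.inner_eq_star_dotProduct, dotProduct, mul_comm]
  have ha : a ≠ 0 := by
    rintro rfl
    simp at hw₀
  filter_upwards [ae_apply_sub_integral_eq_zero (hXint n) L (by simpa only [hL] using hwn n)]
    with ω hω
  refine hP.mulVec_eq_zero_of_dotProduct_eq_zero hsimple (w := Complex.ofRealHom ∘ a) ?_ ?_ ?_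
  · exact fun h => ha (funext fun j => by simpa using congrFun h j)
  · ext i
    exact (RingHom.map_vecMul Complex.ofRealHom A a i).symm.trans (by simp [hA])
  · rw [hL] at hω
    simpa [dotProduct] using congrArg Complex.ofReal hω

/-- Under the Pólya urn hypotheses (q ≥ 2; a'A = b a' with b > 0; (X_n)
adapted and integrable with X₀ deterministic, w₀ := a·X₀ > 0, w_n := w₀ + nb;
a·X_n = w_n a.s.; E[X_{n+1} − X_n | F_n] = w_n⁻¹ A X_n a.s.), assume moreover that
λ₁ = b is an eigenvalue of (the complexification of) A of algebraic multiplicity 1.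
Then for every n ≥ 0, P_{λ₁}(X_n − E X_n) = 0 almost surely, where P_{λ₁} is the
spectral projection of A (extended complex-linearly to ℂ^q) for the eigenvalue λ₁. -/
theorem urn_spectralProj_top_eigenvalue_centered_eq_zero
    (q : ℕ) (hq : 2 ≤ q) {Ω : Type} {m0 : MeasurableSpace Ω}
    (μ : Measure Ω) [IsProbabilityMeasure μ] (ℱ : Filtration ℕ m0)
    (a : Fin q → ℝ) (b : ℝ) (hb : 0 < b)
    (A : Matrix (Fin q) (Fin q) ℝ) (hA : Matrix.vecMul a A = b • a)
    (X : ℕ → Ω → EuclideanSpace ℝ (Fin q)) (hadp : Adapted ℱ X)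
    (hXint : ∀ n, Integrable (X n) μ)
    (x₀ : EuclideanSpace ℝ (Fin q)) (hX0 : X 0 = fun _ => x₀)
    (hw₀ : 0 < ∑ j, a j * x₀ j)
    (hwn : ∀ n : ℕ, ∀ᵐ ω ∂μ, ∑ j, a j * X n ω j = (∑ j, a j * x₀ j) + (n : ℝ) * b)
    (hcond : ∀ n : ℕ, μ[fun ω => X (n + 1) ω - X n ω | ℱ n] =ᵐ[μ]
      fun ω => ((∑ j, a j * x₀ j) + (n : ℝ) * b)⁻¹ • (Matrix.toEuclideanCLM (𝕜 := ℝ) A (X n ω)))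
    (hsimple : Polynomial.rootMultiplicity (b : ℂ)
      (Matrix.charpoly (A.map (fun x : ℝ => (x : ℂ)))) = 1)
    (P : Matrix (Fin q) (Fin q) ℂ)
    (hP : IsSpectralProj (A.map (fun x : ℝ => (x : ℂ))) (b : ℂ) P) :
    ∀ n : ℕ, ∀ᵐ ω ∂μ,
      P.mulVec (fun j => ((X n ω j - (∫ ω', X n ω' ∂μ) j : ℝ) : ℂ)) = 0 :=
  urn_spectralProj_top_eigenvalue_centered_eq_zero_general q (m0 := m0) μ a b A hA X hXint x₀ hw₀
    hwn hsimple P hP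
end

section
/- Let λ ∈ ℂ, w₀ > 0, b > 0, and w_k := w₀ + kb. There is a constant C (depending on λ, b, w₀ but not on i, j) such that for all integers 1 ≤ i ≤ j with w_i ≥ 2|λ|: |∏_{k=i}^{j−1}(1 + λ/w_k)| ≤ C (j/i)^{Re λ / b}. -/
/-!
Since `|1 + z|² = 1 + 2 Re z + |z|² ≤ exp (2 Re z + |z|²)`, the product is at most
`exp (Re λ · ∑ 1/w_k + |λ|²/2 · ∑ 1/w_k²)`. The second sum telescopes against
`1/w_k - 1/w_{k+1}` and is bounded. For the first, `b/w_{k+1} ≤ log w_{k+1} - log w_k ≤ b/w_k`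
puts `b ∑ 1/w_k` within `b/w₀` of `log w_j - log w_i`, and `log w_k - log k` stays in
`[log b, log (w₀ + b)]`; hence `b ∑ 1/w_k = log (j/i) + O(1)`, and multiplying by `Re λ / b`
gives the power `(j/i)^(Re λ / b)` up to a constant factor.
-/

open Finset Real

lemma Complex.norm_one_add_le_exp (z : ℂ) : ‖1 + z‖ ≤ Real.exp (z.re + ‖z‖ ^ 2 / 2) := by
  have hsq : ‖1 + z‖ ^ 2 = 1 + (2 * z.re + ‖z‖ ^ 2) := by
    rw [Complex.sq_norm, Complex.sq_norm, Complex.normSq_apply, Complex.normSq_apply]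
    simp only [Complex.add_re, Complex.one_re, Complex.add_im, Complex.one_im]
    ring
  have hexp : Real.exp (z.re + ‖z‖ ^ 2 / 2) ^ 2 = Real.exp (2 * z.re + ‖z‖ ^ 2) := by
    rw [← Real.exp_nat_mul]; ring_nf
  rw [← pow_le_pow_iff_left₀ (norm_nonneg _) (Real.exp_pos _).le two_ne_zero, hsq, hexp, add_comm]
  exact Real.add_one_le_exp _

lemma norm_prod_one_add_div_le_exp {ι : Type*} (s : Finset ι) (lam : ℂ) (w : ι → ℝ) :
    ‖∏ k ∈ s, (1 + lam / (w k : ℂ))‖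
      ≤ exp (lam.re * ∑ k ∈ s, 1 / w k + ‖lam‖ ^ 2 / 2 * ∑ k ∈ s, 1 / w k ^ 2) := by
  have hexponent : lam.re * ∑ k ∈ s, 1 / w k + ‖lam‖ ^ 2 / 2 * ∑ k ∈ s, 1 / w k ^ 2
      = ∑ k ∈ s, ((lam / (w k : ℂ)).re + ‖lam / (w k : ℂ)‖ ^ 2 / 2) := by
    rw [mul_sum, mul_sum, ← sum_add_distrib]
    refine sum_congr rfl fun k _ => ?_
    rw [Complex.div_ofReal_re, norm_div, Complex.norm_real, Real.norm_eq_abs, div_pow, sq_abs]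
    ring
  rw [norm_prod, hexponent, exp_sum]
  exact prod_le_prod (fun _ _ => norm_nonneg _) fun k _ => Complex.norm_one_add_le_exp _

lemma log_add_sub_log_le_div {w b : ℝ} (hw : 0 < w) (hb : 0 ≤ b) :
    log (w + b) - log w ≤ b / w := by
  rw [← log_div (by positivity) hw.ne']
  refine (log_le_sub_one_of_pos (by positivity)).trans_eq ?_
  field_simp; ring

lemma div_add_le_log_add_sub_log {w b : ℝ} (hw : 0 < w) (hb : 0 ≤ b) :
    b / (w + b) ≤ log (w + b) - log w := by
  rw [← log_div (by positivity) hw.ne']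
  refine (one_sub_inv_le_log_of_pos (by positivity)).trans_eq' ?_
  field_simp; ring

section ArithmeticProgression

variable {w₀ b : ℝ}

lemma abs_mul_sum_one_div_sub_log_sub_log_le (hw₀ : 0 < w₀) (hb : 0 ≤ b) {i j : ℕ} (hij : i ≤ j) :
    |b * ∑ k ∈ Ico i j, 1 / (w₀ + k * b) - (log (w₀ + j * b) - log (w₀ + i * b))| ≤ b / w₀ := by
  have hw : ∀ k : ℕ, 0 < w₀ + k * b := fun k => by positivity
  have hsucc : ∀ k : ℕ, w₀ + ((k + 1 : ℕ) : ℝ) * b = (w₀ + k * b) + b := fun k => by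
    push_cast; ring
  rw [mul_sum, abs_le]
  constructor
  · have hlog : log (w₀ + j * b) - log (w₀ + i * b) ≤ ∑ k ∈ Ico i j, b * (1 / (w₀ + k * b)) := by
      rw [← sum_Ico_sub (fun k : ℕ => log (w₀ + k * b)) hij]
      refine sum_le_sum fun k _ => ?_
      rw [hsucc, mul_one_div]
      exact log_add_sub_log_le_div (hw k) hb
    have : 0 ≤ b / w₀ := by positivity
    linarith
  · -- telescope `log w_k - b / w_k`, using `b / w_{k+1} ≤ log w_{k+1} - log w_k`
    have hsum : ∑ k ∈ Ico i j, b * (1 / (w₀ + k * b))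
        ≤ (log (w₀ + j * b) - b / (w₀ + j * b)) - (log (w₀ + i * b) - b / (w₀ + i * b)) := by
      rw [← sum_Ico_sub (fun k : ℕ => log (w₀ + k * b) - b / (w₀ + k * b)) hij]
      refine sum_le_sum fun k _ => ?_
      simp only [hsucc]
      have := div_add_le_log_add_sub_log (hw k) hb
      rw [mul_one_div]
      linarith
    have hi : b / (w₀ + i * b) ≤ b / w₀ :=
      div_le_div_of_nonneg_left hb hw₀ (le_add_of_nonneg_right (by positivity))
    have hj : 0 ≤ b / (w₀ + j * b) := div_nonneg hb (hw j).le
    linarith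

lemma one_div_sq_le_mul_one_div_sub_one_div {w : ℝ} (hw₀ : 0 < w₀) (hb : 0 < b) (hw : w₀ ≤ w) :
    1 / w ^ 2 ≤ (1 / w₀ + 1 / b) * (1 / w - 1 / (w + b)) := by
  have hw' : 0 < w := hw₀.trans_le hw
  rw [div_sub_div _ _ hw'.ne' (by positivity), div_le_iff₀ (by positivity)]
  field_simp
  nlinarith [mul_le_mul_of_nonneg_left hw hb.le]

lemma sum_one_div_sq_le (hw₀ : 0 < w₀) (hb : 0 < b) {i j : ℕ} (hij : i ≤ j) :
    ∑ k ∈ Ico i j, 1 / (w₀ + k * b) ^ 2 ≤ (1 / w₀ + 1 / b) / w₀ := by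
  have hw : ∀ k : ℕ, w₀ ≤ w₀ + k * b := fun k => le_add_of_nonneg_right (by positivity)
  set c := 1 / w₀ + 1 / b
  have hsum : ∑ k ∈ Ico i j, 1 / (w₀ + k * b) ^ 2 ≤ -c / (w₀ + j * b) - -c / (w₀ + i * b) := by
    rw [← sum_Ico_sub (fun k : ℕ => -c / (w₀ + k * b)) hij]
    refine sum_le_sum fun k _ => ?_
    have := one_div_sq_le_mul_one_div_sub_one_div hw₀ hb (hw k)
    push_cast
    rw [show w₀ + (k + 1) * b = w₀ + k * b + b by ring]
    linarith [show -c / (w₀ + k * b + b) - -c / (w₀ + k * b)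
      = c * (1 / (w₀ + k * b) - 1 / (w₀ + k * b + b)) by ring]
  have hi : c / (w₀ + i * b) ≤ c / w₀ := div_le_div_of_nonneg_left (by positivity) hw₀ (hw i)
  have hj : 0 ≤ c / (w₀ + j * b) := div_nonneg (by positivity) (hw₀.trans_le (hw j)).le
  linarith [show -c / (w₀ + j * b) - -c / (w₀ + i * b) = c / (w₀ + i * b) - c / (w₀ + j * b) by
    ring]

lemma abs_log_sub_log_sub_log_sub_log_le (hw₀ : 0 ≤ w₀) (hb : 0 < b) {i j : ℕ} (hi : 1 ≤ i)
    (hj : 1 ≤ j) :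
    |(log (w₀ + j * b) - log (w₀ + i * b)) - (log j - log i)| ≤ log (w₀ + b) - log b := by
  have hbounds : ∀ k : ℕ, 1 ≤ k → log b ≤ log (w₀ + k * b) - log k ∧
      log (w₀ + k * b) - log k ≤ log (w₀ + b) := fun k hk => by
    have hk' : (1 : ℝ) ≤ k := by exact_mod_cast hk
    rw [← log_div (by positivity) (by positivity), show (w₀ + k * b) / k = w₀ / k + b by
      field_simp]
    exact ⟨log_le_log hb (by linarith [div_nonneg hw₀ (by positivity : (0 : ℝ) ≤ k)]),
      log_le_log (by positivity) (by linarith [div_le_self hw₀ hk'])⟩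
  rw [show (log (w₀ + j * b) - log (w₀ + i * b)) - (log j - log i)
      = (log (w₀ + j * b) - log j) - (log (w₀ + i * b) - log i) by ring]
  exact abs_sub_le_of_le_of_le (hbounds j hj).1 (hbounds j hj).2 (hbounds i hi).1 (hbounds i hi).2

lemma abs_mul_sum_one_div_sub_log_nat_sub_log_nat_le (hw₀ : 0 < w₀) (hb : 0 < b) {i j : ℕ}
    (hi : 1 ≤ i) (hij : i ≤ j) :
    |b * ∑ k ∈ Ico i j, 1 / (w₀ + k * b) - (log j - log i)|
      ≤ b / w₀ + (log (w₀ + b) - log b) :=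
  (abs_sub_le _ _ _).trans <| add_le_add (abs_mul_sum_one_div_sub_log_sub_log_le hw₀ hb.le hij)
    (abs_log_sub_log_sub_log_sub_log_le hw₀.le hb hi (hi.trans hij))

end ArithmeticProgression

/-- Let λ ∈ ℂ, w₀ > 0, b > 0 and w_k := w₀ + kb. There is a constant `C`
(depending on λ, b, w₀ but not on i, j) such that for all integers 1 ≤ i ≤ j with
w_i ≥ 2|λ|:  |∏_{k=i}^{j−1} (1 + λ/w_k)| ≤ C (j/i)^{Re λ / b}. -/
theorem abs_prod_one_add_div_le (lam : ℂ) (w₀ b : ℝ) (hw₀ : 0 < w₀) (hb : 0 < b) :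
    ∃ C : ℝ, ∀ i j : ℕ, 1 ≤ i → i ≤ j → 2 * ‖lam‖ ≤ w₀ + (i : ℝ) * b →
      ‖∏ k ∈ Finset.Ico i j, (1 + lam / ((w₀ + (k : ℝ) * b : ℝ) : ℂ))‖
        ≤ C * ((j : ℝ) / (i : ℝ)) ^ (lam.re / b) := by
  set M := b / w₀ + (log (w₀ + b) - log b)
  refine ⟨exp (|lam.re / b| * M + ‖lam‖ ^ 2 / 2 * ((1 / w₀ + 1 / b) / w₀)),
    fun i j hi hij _ => ?_⟩
  have hi₀ : (0 : ℝ) < i := by exact_mod_cast hi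
  have hj₀ : (0 : ℝ) < j := by exact_mod_cast hi.trans hij
  set S := ∑ k ∈ Ico i j, 1 / (w₀ + k * b)
  have hS : |b * S - (log j - log i)| ≤ M :=
    abs_mul_sum_one_div_sub_log_nat_sub_log_nat_le hw₀ hb hi hij
  have hre : lam.re * S ≤ lam.re / b * (log j - log i) + |lam.re / b| * M := by
    have hsplit : lam.re * S
        = lam.re / b * (log j - log i) + lam.re / b * (b * S - (log j - log i)) := by
      field_simp; ring
    rw [hsplit, add_le_add_iff_left]
    exact (le_abs_self _).trans ((abs_mul _ _).trans_le (by gcongr))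
  have hsq : ‖lam‖ ^ 2 / 2 * ∑ k ∈ Ico i j, 1 / (w₀ + k * b) ^ 2
      ≤ ‖lam‖ ^ 2 / 2 * ((1 / w₀ + 1 / b) / w₀) :=
    mul_le_mul_of_nonneg_left (sum_one_div_sq_le hw₀ hb hij) (by positivity)
  rw [rpow_def_of_pos (div_pos hj₀ hi₀), log_div hj₀.ne' hi₀.ne', ← exp_add]
  refine (norm_prod_one_add_div_le_exp _ lam (fun k : ℕ => w₀ + k * b)).trans (exp_le_exp.2 ?_)
  linarith
end

section
/- Let N be a nilpotent q×q complex matrix with N^{ν+1} = 0 for an integer ν ≥ 0, let λ ∈ ℂ, w₀ > 0, b > 0, and w_k := w₀ + kb. There is a constant C (depending on N, ν, λ, b, w₀ but not on i, j) such that for all integers 1 ≤ i ≤ j with w_i ≥ 2|λ|: ‖∏_{k=i}^{j−1}(I + (w_k + λ)⁻¹ N)‖ ≤ C (1 + log(j/i))^{ν}. -/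
/-- The operator norm of a complex q×q matrix, with respect to the Euclidean norm. -/
noncomputable def opNorm {q : ℕ} (M : Matrix (Fin q) (Fin q) ℂ) : ℝ :=
  ‖Matrix.toEuclideanCLM (𝕜 := ℂ) M‖

/-!
With `c_k = (w_k + λ)⁻¹` the product is `p(N)` for the polynomial `p = ∏ (1 + c_k X)`, whose
`m`-th coefficient has norm at most `(∑ ‖c_k‖)^m`. Since `N^(ν+1) = 0` only the coefficients of
degree `≤ ν` survive, so the product has norm at most `(1 + ∑ ‖c_k‖)^ν ∑_{m ≤ ν} ‖N^m‖`.
Finally `‖c_k‖ ≤ 2 / w_k ≤ 2 / (b k)`, and `∑_{k=i}^{j-1} 1/k ≤ 2 log (j/i)`.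
-/

open Polynomial

section NormedRing

variable {R : Type*} [SeminormedRing R] [NormOneClass R]

theorem norm_coeff_prod_one_add_C_mul_X_le {ι : Type*} (c : ι → R) (l : List ι) (m : ℕ) :
    ‖((l.map fun k => 1 + C (c k) * X).prod).coeff m‖ ≤ (l.map fun k => ‖c k‖).sum ^ m := by
  induction l generalizing m with
  | nil => cases m <;> simp [coeff_one]
  | cons k l ih =>
    set p := (l.map fun k => 1 + C (c k) * X).prod
    set S := (l.map fun k => ‖c k‖).sum
    have hS : 0 ≤ S := List.sum_nonneg (by simp)
    simp only [List.map_cons, List.prod_cons, List.sum_cons, add_mul, one_mul, mul_assoc,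
      coeff_add, coeff_C_mul]
    cases m with
    | zero => simpa using ih 0
    | succ m =>
      rw [coeff_X_mul]
      calc ‖p.coeff (m + 1) + c k * p.coeff m‖
          ≤ S ^ (m + 1) + ‖c k‖ * S ^ m :=
            (norm_add_le _ _).trans (add_le_add (ih _) ((norm_mul_le _ _).trans
              (mul_le_mul_of_nonneg_left (ih m) (norm_nonneg _))))
        _ = S ^ m * (S + ‖c k‖) := by ring
        _ ≤ (‖c k‖ + S) ^ m * (‖c k‖ + S) := by
            rw [add_comm S]
            gcongr
            linarith [norm_nonneg (c k)]
        _ = (‖c k‖ + S) ^ (m + 1) := (pow_succ _ _).symm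

end NormedRing

theorem aeval_eq_sum_range_of_pow_eq_zero {R A : Type*} [CommSemiring R] [Semiring A]
    [Algebra R A] {N : A} {ν : ℕ} (hN : N ^ (ν + 1) = 0) (p : R[X]) :
    aeval N p = ∑ m ∈ Finset.range (ν + 1), p.coeff m • N ^ m := by
  rw [aeval_eq_sum_range' (Nat.lt_succ_of_le (le_max_left p.natDegree ν))]
  refine (Finset.sum_subset (Finset.range_subset_range.2 (Nat.succ_le_succ (le_max_right _ _)))
    fun m _ hm => ?_).symm
  rw [pow_eq_zero_of_le (by simpa using hm) hN, smul_zero]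

section NormedAlgebra

variable {𝕜 A : Type*} [NormedField 𝕜] [SeminormedRing A] [NormedAlgebra 𝕜 A] {N : A} {ν : ℕ}

theorem norm_aeval_le_of_pow_eq_zero (hN : N ^ (ν + 1) = 0) (p : 𝕜[X]) :
    ‖aeval N p‖ ≤ ∑ m ∈ Finset.range (ν + 1), ‖p.coeff m‖ * ‖N ^ m‖ := by
  rw [aeval_eq_sum_range_of_pow_eq_zero hN]
  exact (norm_sum_le _ _).trans (Finset.sum_le_sum fun m _ => (norm_smul _ _).le)

theorem norm_prod_one_add_smul_le_of_pow_eq_zero (hN : N ^ (ν + 1) = 0) {ι : Type*} (c : ι → 𝕜)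
    (l : List ι) :
    ‖(l.map fun k => 1 + c k • N).prod‖
      ≤ (1 + (l.map fun k => ‖c k‖).sum) ^ ν * ∑ m ∈ Finset.range (ν + 1), ‖N ^ m‖ := by
  set S := (l.map fun k => ‖c k‖).sum
  have hS : 0 ≤ S := List.sum_nonneg (by simp)
  have hprod :
      (l.map fun k => 1 + c k • N).prod = aeval N (l.map fun k => 1 + C (c k) * X).prod := by
    simp [map_list_prod, Function.comp_def, Algebra.smul_def]
  rw [hprod, Finset.mul_sum]
  refine (norm_aeval_le_of_pow_eq_zero hN _).trans (Finset.sum_le_sum fun m hm => ?_)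
  gcongr
  calc ‖((l.map fun k => 1 + C (c k) * X).prod).coeff m‖ ≤ S ^ m :=
        norm_coeff_prod_one_add_C_mul_X_le c l m
    _ ≤ (1 + S) ^ m := by gcongr; linarith
    _ ≤ (1 + S) ^ ν := pow_le_pow_right₀ (by linarith) (Finset.mem_range_succ_iff.1 hm)

end NormedAlgebra

theorem norm_inv_add_le_of_two_mul_norm_le {𝕜 : Type*} [NormedDivisionRing 𝕜] {x z : 𝕜}
    (hx : x ≠ 0) (hz : 2 * ‖z‖ ≤ ‖x‖) : ‖(x + z)⁻¹‖ ≤ 2 / ‖x‖ := by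
  have hx' : 0 < ‖x‖ := norm_pos_iff.2 hx
  have hxz : ‖x‖ / 2 ≤ ‖x + z‖ := by
    have := norm_sub_norm_le x (-z)
    rw [norm_neg, sub_neg_eq_add] at this
    linarith
  rw [norm_inv, ← inv_div]
  exact inv_anti₀ (by positivity) hxz

theorem inv_le_two_mul_log_add_one_sub_log {x : ℝ} (hx : 1 ≤ x) :
    x⁻¹ ≤ 2 * (Real.log (x + 1) - Real.log x) := by
  have hx0 : 0 < x := by linarith
  -- `log (1 + 1/x) ≥ 1/(x+1) ≥ 1/(2x)`
  have hlog : 1 - x / (x + 1) ≤ Real.log (x + 1) - Real.log x := by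
    rw [← Real.log_div (by linarith) hx0.ne', ← inv_div]
    exact Real.one_sub_inv_le_log_of_pos (by positivity)
  have : 1 - x / (x + 1) = (x + 1)⁻¹ := by field_simp; ring
  have : x⁻¹ ≤ 2 * (x + 1)⁻¹ := by
    rw [inv_le_iff_one_le_mul₀ hx0]; field_simp; linarith
  linarith

theorem sum_range'_inv_le_two_mul_log {i : ℕ} (hi : 1 ≤ i) (n : ℕ) :
    ((List.range' i n).map fun k : ℕ => (k : ℝ)⁻¹).sum
      ≤ 2 * (Real.log (i + n) - Real.log i) := by
  induction n generalizing i with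
  | zero => simp
  | succ n ih =>
    rw [List.range'_succ, List.map_cons, List.sum_cons]
    have h₁ := inv_le_two_mul_log_add_one_sub_log (x := i) (by exact_mod_cast hi)
    have h₂ := ih (i := i + 1) (by omega)
    push_cast at h₂ ⊢
    rw [add_assoc, add_comm 1 (n : ℝ)] at h₂
    linarith

theorem sum_norm_inv_add_le_log {w₀ b : ℝ} (hw₀ : 0 ≤ w₀) (hb : 0 < b) {lam : ℂ} {i : ℕ}
    (hi : 1 ≤ i) (hlam : 2 * ‖lam‖ ≤ w₀ + i * b) (n : ℕ) :
    ((List.range' i n).map fun k : ℕ => ‖(((w₀ + k * b : ℝ) : ℂ) + lam)⁻¹‖).sum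
      ≤ 4 / b * (Real.log (i + n) - Real.log i) := by
  have hterm : ∀ k ∈ List.range' i n, ‖(((w₀ + k * b : ℝ) : ℂ) + lam)⁻¹‖ ≤ 2 / b * (k : ℝ)⁻¹ := by
    intro k hk
    have hik : (i : ℝ) ≤ k := by exact_mod_cast (List.mem_range'_1.1 hk).1
    have hk : (0 : ℝ) < k := by linarith [show (1 : ℝ) ≤ i by exact_mod_cast hi]
    have hw : 0 < w₀ + k * b := by positivity
    have hnorm : ‖((w₀ + k * b : ℝ) : ℂ)‖ = w₀ + k * b := by
      rw [Complex.norm_real, Real.norm_of_nonneg hw.le]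
    calc ‖(((w₀ + k * b : ℝ) : ℂ) + lam)⁻¹‖ ≤ 2 / (w₀ + k * b) := by
          have h := norm_inv_add_le_of_two_mul_norm_le (x := ((w₀ + k * b : ℝ) : ℂ)) (z := lam)
            (by exact_mod_cast hw.ne') (by rw [hnorm]; nlinarith)
          rwa [hnorm] at h
      _ ≤ 2 / (k * b) := by gcongr; linarith
      _ = 2 / b * (k : ℝ)⁻¹ := by field_simp
  calc _ ≤ ((List.range' i n).map fun k : ℕ => 2 / b * (k : ℝ)⁻¹).sum := List.sum_le_sum hterm
    _ = 2 / b * ((List.range' i n).map fun k : ℕ => (k : ℝ)⁻¹).sum := List.sum_map_mul_left _ _ _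
    _ ≤ 2 / b * (2 * (Real.log (i + n) - Real.log i)) := by
        gcongr; exact sum_range'_inv_le_two_mul_log hi n
    _ = _ := by ring

/-- Let N be a nilpotent q×q complex matrix with N^{ν+1} = 0 (ν ≥ 0 an
integer), λ ∈ ℂ, w₀ > 0, b > 0, w_k := w₀ + kb. There is a constant `C` (depending on
N, ν, λ, b, w₀ but not on i, j) such that for all integers 1 ≤ i ≤ j with w_i ≥ 2|λ|:
‖∏_{k=i}^{j−1} (I + (w_k + λ)⁻¹ N)‖ ≤ C (1 + log(j/i))^ν.
(The factors commute, so the product may be taken in any order; here it is taken with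
increasing k from left to right.) -/
theorem opNorm_prod_one_add_nilpotent_le (q : ℕ) (N : Matrix (Fin q) (Fin q) ℂ) (ν : ℕ)
    (hN : N ^ (ν + 1) = 0) (lam : ℂ) (w₀ b : ℝ) (hw₀ : 0 < w₀) (hb : 0 < b) :
    ∃ C : ℝ, ∀ i j : ℕ, 1 ≤ i → i ≤ j → 2 * ‖lam‖ ≤ w₀ + (i : ℝ) * b →
      opNorm (((List.range' i (j - i)).map fun k =>
          (1 : Matrix (Fin q) (Fin q) ℂ) + (((w₀ + (k : ℝ) * b : ℝ) : ℂ) + lam)⁻¹ • N).prod)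
        ≤ C * (1 + Real.log ((j : ℝ) / (i : ℝ))) ^ ν := by
  set T := ∑ m ∈ Finset.range (ν + 1), ‖Matrix.toEuclideanCLM (𝕜 := ℂ) N ^ m‖
  refine ⟨(1 + 4 / b) ^ ν * T, fun i j hi hij hlam => ?_⟩
  have hN' : Matrix.toEuclideanCLM (𝕜 := ℂ) N ^ (ν + 1) = 0 := by rw [← map_pow, hN, map_zero]
  have hi' : (0 : ℝ) < i := by exact_mod_cast hi
  have hij' : (i : ℝ) ≤ j := by exact_mod_cast hij
  have hL : 0 ≤ Real.log (j / i) := Real.log_nonneg ((one_le_div hi').2 hij')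
  have hS := sum_norm_inv_add_le_log hw₀.le hb hi hlam (j - i)
  rw [Nat.cast_sub hij, add_sub_cancel, ← Real.log_div (hi'.trans_le hij').ne' hi'.ne'] at hS
  rw [opNorm, map_list_prod]
  -- in the statement `k : ℝ`, so `List.range' i (j - i)` is coerced to `List ℝ` by a monadic lift
  simp only [bind_pure_comp, List.map_eq_map, List.map_map, Function.comp_def, map_add, map_one,
    map_smul]
  calc _ ≤ (1 + _) ^ ν * T := norm_prod_one_add_smul_le_of_pow_eq_zero hN' _ _
    _ ≤ ((1 + 4 / b) * (1 + Real.log (j / i))) ^ ν * T := by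
        gcongr
        · exact add_nonneg zero_le_one
            (List.sum_nonneg (List.forall_mem_map.2 fun _ _ => norm_nonneg _))
        · nlinarith [show 0 ≤ 4 / b by positivity]
    _ = _ := by rw [mul_pow]; ring
end
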